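/- arXiv:2402.10437 — 5 statements merged into one kernel-verified Lean document; each statement's English description precedes it below -/
import Mathlib

section
/- For every integer t ≥ 1 and every integer n ≥ 0, the number of compositions of t having exactly n parts greater than 1 (equivalently, exactly n parts of size at least 2, all other parts being equal to 1) is equal to the binomial coefficient C(t, 2n). -/
open Finset Filter

/-- Number of compositions of `t` all of whose parts are at most `D`. -/
def compCountLe (t D : ℕ) : ℕ :=
  (Finset.univ.filter (fun c : Composition t => ∀ p ∈ c.blocks, p ≤ D)).card

/-- Number of compositions of `t` with exactly `n` parts greater than `D`
(all other parts being at most `D`). -/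
def compCountExact (t n D : ℕ) : ℕ :=
  (Finset.univ.filter (fun c : Composition t =>
    c.blocks.countP (fun p => D < p) = n)).card


/-- Prepend a first block `b` to a composition of `t - b`. -/
def consC {t : ℕ} (b : ℕ) (hb : 0 < b) (hbt : b ≤ t) (c : Composition (t - b)) :
    Composition t where
  blocks := b :: c.blocks
  blocks_pos := by
    intro i hi
    rcases List.mem_cons.1 hi with h | h
    · omega
    · exact c.blocks_pos h
  blocks_sum := by
    simp [c.blocks_sum]
    omega

lemma consC_injective {t : ℕ} (b : ℕ) (hb : 0 < b) (hbt : b ≤ t) :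
    Function.Injective (consC (t := t) b hb hbt) := by
  intro c d h
  have : b :: c.blocks = b :: d.blocks := congrArg Composition.blocks h
  exact Composition.ext (List.cons_injective this)

lemma hockey (m k : ℕ) : ∑ j ∈ Finset.range m, j.choose k = m.choose (k + 1) := by
  induction m with
  | zero => simp
  | succ m ih => rw [Finset.sum_range_succ, ih, Nat.choose_succ_succ' m k]; omega


lemma key (t n : ℕ) (ht : 1 ≤ t) :
    compCountExact t n 1 =
      ∑ b ∈ (Finset.Icc 1 t).attach,
        (Finset.univ.filter (fun c : Composition (t - b.1) =>
          (if 1 < b.1 then 1 else 0) + c.blocks.countP (fun p => 1 < p) = n)).card := by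
  classical
  have hcover : (Finset.univ.filter (fun c : Composition t =>
      c.blocks.countP (fun p => 1 < p) = n))
      = (Finset.Icc 1 t).attach.biUnion (fun b =>
          ((Finset.univ.filter (fun c : Composition (t - b.1) =>
            (if 1 < b.1 then 1 else 0) + c.blocks.countP (fun p => 1 < p) = n)).image
            (consC b.1 (by have h := Finset.mem_Icc.1 b.2; omega)
              (by have h := Finset.mem_Icc.1 b.2; omega)))) := by
    ext c
    simp only [Finset.mem_filter, Finset.mem_univ, true_and, Finset.mem_biUnion,
      Finset.mem_attach, Finset.mem_image]
    constructor
    · intro hc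
      obtain ⟨b, bs, hbs⟩ : ∃ b bs, c.blocks = b :: bs := by
        cases h : c.blocks with
        | nil => exfalso; have := c.blocks_sum; rw [h] at this; simp at this; omega
        | cons b bs => exact ⟨b, bs, rfl⟩
      have hbpos : 0 < b := c.blocks_pos (by rw [hbs]; exact List.mem_cons_self)
      have hsum : b + bs.sum = t := by
        have := c.blocks_sum
        rw [hbs] at this
        simpa using this
      have hbmem : b ∈ Finset.Icc 1 t := by simp; omega
      refine ⟨⟨b, hbmem⟩, ?_⟩
      refine ⟨⟨bs, fun hi => c.blocks_pos (by rw [hbs]; exact List.mem_cons_of_mem _ hi), ?_⟩,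
        ?_, ?_⟩
      · show bs.sum = t - b
        omega
      · show (if 1 < b then 1 else 0) + bs.countP (fun p => decide (1 < p)) = n
        rw [hbs, List.countP_cons] at hc
        simp only [decide_eq_true_eq] at hc
        omega
      · exact Composition.ext hbs.symm
    · rintro ⟨b, c', hc', rfl⟩
      show List.countP _ (b.1 :: c'.blocks) = _
      rw [List.countP_cons]
      simp only [decide_eq_true_eq]
      split at hc' <;> split <;> omega
  have hdisj : ∀ x ∈ (Finset.Icc 1 t).attach, ∀ y ∈ (Finset.Icc 1 t).attach, x ≠ y →
      Disjoint
        ((Finset.univ.filter (fun c : Composition (t - x.1) =>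
            (if 1 < x.1 then 1 else 0) + c.blocks.countP (fun p => 1 < p) = n)).image
          (consC x.1 (by have h := Finset.mem_Icc.1 x.2; omega)
            (by have h := Finset.mem_Icc.1 x.2; omega)))
        ((Finset.univ.filter (fun c : Composition (t - y.1) =>
            (if 1 < y.1 then 1 else 0) + c.blocks.countP (fun p => 1 < p) = n)).image
          (consC y.1 (by have h := Finset.mem_Icc.1 y.2; omega)
            (by have h := Finset.mem_Icc.1 y.2; omega))) := by
    intro x _ y _ hxy
    rw [Finset.disjoint_left]
    rintro c hcx hcy
    simp only [Finset.mem_image] at hcx hcy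
    obtain ⟨cx, _, hx⟩ := hcx
    obtain ⟨cy, _, hy⟩ := hcy
    apply hxy
    have hx' : c.blocks = x.1 :: cx.blocks := by rw [← hx]; rfl
    have hy' : c.blocks = y.1 :: cy.blocks := by rw [← hy]; rfl
    have : x.1 = y.1 := by rw [hx'] at hy'; exact (List.cons.injEq _ _ _ _ ▸ hy').1
    exact Subtype.ext this
  rw [compCountExact, hcover, Finset.card_biUnion hdisj]
  refine Finset.sum_congr rfl ?_
  intro b _
  rw [Finset.card_image_of_injective _ (consC_injective _ _ _)]

lemma blocks_nil (c : Composition 0) : c.blocks = [] := by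
  cases h : c.blocks with
  | nil => rfl
  | cons b bs =>
    exfalso
    have hb := c.blocks_pos (h ▸ (List.mem_cons_self : b ∈ b :: bs))
    have hs := c.blocks_sum
    rw [h] at hs
    simp at hs
    omega

lemma main_aux (t : ℕ) : ∀ n, compCountExact t n 1 = t.choose (2 * n) := by
  induction t using Nat.strong_induction_on with
  | _ t ih =>
    intro n
    rcases Nat.eq_zero_or_pos t with rfl | ht
    · have hall : ∀ c : Composition 0, c.blocks.countP (fun p => 1 < p) = 0 := by
        intro c; rw [blocks_nil c]; rfl
      rcases Nat.eq_zero_or_pos n with rfl | hn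
      · have : (Finset.univ.filter (fun c : Composition 0 =>
            c.blocks.countP (fun p => 1 < p) = 0)) = Finset.univ := by
          apply Finset.filter_true_of_mem; intro c _; exact hall c
        rw [compCountExact, this]
        simp [Finset.card_univ]
        have : ∀ c : Composition 0, c = Composition.ones 0 := by
          intro c
          apply Composition.ext
          rw [blocks_nil c]
          rfl
        rw [Fintype.card_eq_one_iff.2 ⟨Composition.ones 0, fun c => this c⟩]
      · have : (Finset.univ.filter (fun c : Composition 0 =>
            c.blocks.countP (fun p => 1 < p) = n)) = ∅ := by
          apply Finset.filter_false_of_mem; intro c _; rw [hall c]; omega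
        rw [compCountExact, this]
        simp
        rw [Nat.choose_eq_zero_of_lt (by omega)]
    · rw [key t n ht,
        Finset.sum_attach (Finset.Icc 1 t) (fun b =>
          (Finset.univ.filter (fun c : Composition (t - b) =>
            (if 1 < b then 1 else 0) + c.blocks.countP (fun p => 1 < p) = n)).card)]
      have hsplit : Finset.Icc 1 t = insert 1 (Finset.Icc 2 t) := by
        ext x; simp [Finset.mem_Icc, Finset.mem_insert]; omega
      rw [hsplit, Finset.sum_insert (by simp)]
      have h1 : (Finset.univ.filter (fun c : Composition (t - 1) =>
          (if (1:ℕ) < 1 then 1 else 0) + c.blocks.countP (fun p => 1 < p) = n)).card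
          = (t - 1).choose (2 * n) := by
        rw [← ih (t - 1) (by omega) n, compCountExact]
        congr 1
        apply Finset.filter_congr
        intro c _
        simp
      rw [h1]
      rcases Nat.eq_zero_or_pos n with rfl | hn
      · have h2 : ∀ b ∈ Finset.Icc 2 t, (Finset.univ.filter (fun c : Composition (t - b) =>
            (if 1 < b then 1 else 0) + c.blocks.countP (fun p => 1 < p) = 0)).card = 0 := by
          intro b hb
          rw [Finset.mem_Icc] at hb
          rw [Finset.card_eq_zero]
          apply Finset.filter_false_of_mem
          intro c _
          rw [if_pos (by omega)]
          omega
        rw [Finset.sum_congr rfl h2]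
        simp
      · obtain ⟨m, rfl⟩ : ∃ m, n = m + 1 := ⟨n - 1, by omega⟩
        have h2 : ∀ b ∈ Finset.Icc 2 t, (Finset.univ.filter (fun c : Composition (t - b) =>
            (if 1 < b then 1 else 0) + c.blocks.countP (fun p => 1 < p) = m + 1)).card
            = (t - b).choose (2 * m) := by
          intro b hb
          rw [Finset.mem_Icc] at hb
          rw [← ih (t - b) (by omega) m, compCountExact]
          congr 1
          apply Finset.filter_congr
          intro c _
          rw [if_pos (by omega : (1:ℕ) < b)]
          omega
        rw [Finset.sum_congr rfl h2]
        have h3 : ∑ b ∈ Finset.Icc 2 t, (t - b).choose (2 * m)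
            = ∑ j ∈ Finset.range (t - 1), j.choose (2 * m) := by
          apply Finset.sum_nbij' (fun b => t - b) (fun j => t - j)
          · intro b hb; rw [Finset.mem_Icc] at hb; rw [Finset.mem_range]; omega
          · intro j hj; rw [Finset.mem_range] at hj; rw [Finset.mem_Icc]; omega
          · intro b hb; rw [Finset.mem_Icc] at hb; omega
          · intro j hj; rw [Finset.mem_range] at hj; omega
          · intro b _; rfl
        rw [h3, hockey]
        obtain ⟨t', rfl⟩ : ∃ t', t = t' + 1 := ⟨t - 1, by omega⟩
        simp only [Nat.add_sub_cancel]
        have : 2 * (m + 1) = (2 * m + 1) + 1 := by ring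
        rw [this, Nat.choose_succ_succ' t' (2 * m + 1)]
        omega


/-- The number of compositions of `t ≥ 1` having exactly `n` parts greater than `1`
(all other parts equal to `1`) is the binomial coefficient `C(t, 2n)`. -/
theorem composition_exact_n_large_parts_depth_one (t n : ℕ) (ht : 1 ≤ t) :
    compCountExact t n 1 = t.choose (2 * n) := main_aux t n
end

section
/- For every integer n ≥ 0, the quantity |C_t^{n,1}| / t^{2n} tends to 1/(2n)! as the integer t tends to infinity, where |C_t^{n,1}| is the number of compositions of t having exactly n parts greater than 1. -/
open Finset Filter

/-- The finset of lists of positive integers summing to `t` with exactly `n`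
entries greater than `1`, realized as blocks of compositions. -/
def listSet (t n : ℕ) : Finset (List ℕ) :=
  (Finset.univ.filter (fun c : Composition t =>
    c.blocks.countP (fun p => 1 < p) = n)).image Composition.blocks

lemma mem_listSet {t n : ℕ} {l : List ℕ} :
    l ∈ listSet t n ↔ l.sum = t ∧ (∀ p ∈ l, 0 < p) ∧ l.countP (fun p => 1 < p) = n := by
  constructor
  · intro h
    simp only [listSet, Finset.mem_image, Finset.mem_filter] at h
    obtain ⟨c, ⟨_, hc⟩, rfl⟩ := h
    exact ⟨c.blocks_sum, fun p hp => c.blocks_pos hp, hc⟩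
  · rintro ⟨hs, hp, hc⟩
    simp only [listSet, Finset.mem_image, Finset.mem_filter]
    exact ⟨⟨l, fun {i} hi => hp i hi, hs⟩, ⟨Finset.mem_univ _, hc⟩, rfl⟩

lemma compCountExact_eq_card_listSet (t n : ℕ) :
    compCountExact t n 1 = (listSet t n).card := by
  unfold compCountExact listSet
  rw [Finset.card_image_of_injective _ (fun c c' h => Composition.ext h)]

lemma listSet_zero (t : ℕ) : listSet t 0 = {List.replicate t 1} := by
  ext l
  simp only [mem_listSet, Finset.mem_singleton]
  constructor
  · rintro ⟨hs, hp, hc⟩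
    rw [List.countP_eq_zero] at hc
    have h1 : ∀ p ∈ l, p = 1 := by
      intro p hpl
      have := hc p hpl
      have := hp p hpl
      simp only [decide_eq_true_eq] at *
      omega
    have hl : l = List.replicate l.length 1 := List.eq_replicate_of_mem h1
    have hlen : l.length = t := by
      rw [hl] at hs
      simpa using hs
    rw [hl, hlen]
  · rintro rfl
    refine ⟨by simp, ?_, ?_⟩
    · intro p hp
      have := List.eq_of_mem_replicate hp
      omega
    · rw [List.countP_eq_zero]
      intro p hp
      have := List.eq_of_mem_replicate hp
      simp [this]

lemma listSet_succ (t n : ℕ) (ht : 1 ≤ t) :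
    listSet t (n + 1) =
      ((listSet (t - 1) (n + 1)).image (List.cons 1)) ∪
      (Finset.Icc 2 t).biUnion (fun a => (listSet (t - a) n).image (List.cons a)) := by
  ext l
  simp only [mem_listSet, Finset.mem_union, Finset.mem_image, Finset.mem_biUnion,
    Finset.mem_Icc]
  constructor
  · rintro ⟨hs, hp, hc⟩
    match l with
    | [] => simp at hs; omega
    | a :: l' =>
      have ha : 0 < a := hp a List.mem_cons_self
      rw [List.sum_cons] at hs
      rw [List.countP_cons] at hc
      have hptail : ∀ p ∈ l', 0 < p := fun p hp' => hp p (List.mem_cons_of_mem a hp')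
      by_cases h1 : a = 1
      · left
        subst h1
        exact ⟨l', ⟨by omega, hptail, by simpa using hc⟩, rfl⟩
      · right
        have ha2 : 2 ≤ a := by omega
        have hat : a ≤ t := by omega
        have h1a : (1 : ℕ) < a := by omega
        have hc' : l'.countP (fun p => 1 < p) = n := by
          simp [h1a] at hc
          omega
        exact ⟨a, ⟨ha2, hat⟩, l', ⟨by omega, hptail, hc'⟩, rfl⟩
  · rintro (⟨l', hl', rfl⟩ | ⟨a, ⟨ha2, hat⟩, l', hl', rfl⟩)
    · obtain ⟨hs, hp, hc⟩ := hl'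
      refine ⟨by rw [List.sum_cons]; omega, ?_, ?_⟩
      · intro p hp'
        rcases List.mem_cons.mp hp' with rfl | h
        · exact one_pos
        · exact hp p h
      · rw [List.countP_cons]; simpa using hc
    · obtain ⟨hs, hp, hc⟩ := hl'
      have h1a : (1 : ℕ) < a := by omega
      refine ⟨by rw [List.sum_cons]; omega, ?_, ?_⟩
      · intro p hp'
        rcases List.mem_cons.mp hp' with rfl | h
        · omega
        · exact hp p h
      · rw [List.countP_cons]
        simp [h1a, hc]

set_option maxHeartbeats 1000000 in
lemma card_listSet_succ (t n : ℕ) (ht : 1 ≤ t) :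
    (listSet t (n + 1)).card =
      (listSet (t - 1) (n + 1)).card + ∑ a ∈ Finset.Icc 2 t, (listSet (t - a) n).card := by
  rw [listSet_succ t n ht]
  rw [Finset.card_union_of_disjoint, Finset.card_image_of_injective _ (List.cons_injective),
    Finset.card_biUnion]
  · congr 1
    exact Finset.sum_congr rfl fun a _ =>
      Finset.card_image_of_injective _ (List.cons_injective)
  · intro a _ b _ hab
    simp only [Finset.disjoint_left, Finset.mem_image]
    rintro l ⟨l1, _, rfl⟩ ⟨l2, _, h⟩
    injection h.symm with h1 h2
    exact hab h1
  · simp only [Finset.disjoint_left, Finset.mem_image, Finset.mem_biUnion, Finset.mem_Icc]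
    rintro l ⟨l1, _, rfl⟩ ⟨a, ⟨ha2, _⟩, l2, _, h⟩
    injection h with h1 h2
    omega

lemma sum_range_choose_eq (m k : ℕ) :
    ∑ s ∈ Finset.range m, s.choose k = m.choose (k + 1) := by
  induction m with
  | zero => simp
  | succ m ih =>
    rw [Finset.sum_range_succ, ih, Nat.choose_succ_succ' m k, Nat.add_comm]

lemma card_listSet_eq (n t : ℕ) : (listSet t n).card = t.choose (2 * n) := by
  induction n generalizing t with
  | zero => rw [listSet_zero]; simp
  | succ n ih =>
    induction t using Nat.strong_induction_on with
    | _ t iht =>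
      match t with
      | 0 =>
        have : listSet 0 (n + 1) = ∅ := by
          ext l
          simp only [mem_listSet, Finset.notMem_empty, iff_false, not_and]
          intro hs hp
          have : l = [] := by
            cases l with
            | nil => rfl
            | cons a l' =>
              exfalso
              have := hp a List.mem_cons_self
              rw [List.sum_cons] at hs
              omega
          subst this
          simp
        rw [this]
        simp [Nat.choose_eq_zero_of_lt]
      | t + 1 =>
        rw [card_listSet_succ (t + 1) n (by omega)]
        have h1 : t + 1 - 1 = t := rfl
        rw [h1, iht t (by omega)]
        have h2 : ∑ a ∈ Finset.Icc 2 (t + 1), (listSet (t + 1 - a) n).card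
            = ∑ s ∈ Finset.range t, s.choose (2 * n) := by
          rw [Finset.sum_congr rfl (fun a _ => ih (t + 1 - a))]
          refine Finset.sum_nbij' (fun a => t + 1 - a) (fun s => t + 1 - s) ?_ ?_ ?_ ?_ ?_
          · intro a ha
            simp only [Finset.mem_Icc] at ha
            simp only [Finset.mem_range]
            omega
          · intro s hs
            simp only [Finset.mem_range] at hs
            simp only [Finset.mem_Icc]
            omega
          · intro a ha
            simp only [Finset.mem_Icc] at ha
            show t + 1 - (t + 1 - a) = a
            omega
          · intro s hs
            simp only [Finset.mem_range] at hs
            show t + 1 - (t + 1 - s) = s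
            omega
          · intro a _
            rfl
        rw [h2, sum_range_choose_eq]
        have h3 : 2 * (n + 1) = (2 * n + 1) + 1 := by ring
        rw [h3, Nat.choose_succ_succ' t (2 * n + 1)]
        have h4 : t.choose (2 * n + 1 + 1) = t.choose (2 * (n + 1)) := by rw [← h3]
        omega

lemma compCountExact_eq_choose (t n : ℕ) :
    compCountExact t n 1 = t.choose (2 * n) := by
  rw [compCountExact_eq_card_listSet, card_listSet_eq]

lemma tendsto_choose_div_pow (k : ℕ) :
    Tendsto (fun t : ℕ => ((t.choose k : ℝ)) / (t : ℝ) ^ k) atTop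
      (nhds (1 / (k.factorial : ℝ))) := by
  have hfac : (k.factorial : ℝ) ≠ 0 := by positivity
  have h1 : Tendsto (fun t : ℕ => (∏ i ∈ Finset.range k, (1 - (i : ℝ) / (t : ℝ)))
      / (k.factorial : ℝ)) atTop (nhds (1 / (k.factorial : ℝ))) := by
    apply Tendsto.div_const
    have hprod : Tendsto (fun t : ℕ => ∏ i ∈ Finset.range k, (1 - (i : ℝ) / (t : ℝ)))
        atTop (nhds (∏ _i ∈ Finset.range k, (1 : ℝ))) := by
      refine tendsto_finset_prod _ (fun i _ => ?_)
      have hi : Tendsto (fun t : ℕ => (i : ℝ) / (t : ℝ)) atTop (nhds 0) :=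
        Tendsto.div_atTop tendsto_const_nhds tendsto_natCast_atTop_atTop
      simpa using tendsto_const_nhds.sub hi
    simpa using hprod
  refine h1.congr' ?_
  filter_upwards [eventually_ge_atTop (k + 1)] with t ht
  have htk : k ≤ t := by omega
  have ht0 : (0 : ℝ) < (t : ℝ) := by
    have : 0 < t := by omega
    exact_mod_cast this
  have hd : ((t.descFactorial k : ℕ) : ℝ) = ∏ i ∈ Finset.range k, ((t : ℝ) - i) := by
    rw [Nat.descFactorial_eq_prod_range, Nat.cast_prod]
    refine Finset.prod_congr rfl fun i hi => ?_
    have : i ≤ t := le_trans (le_of_lt (Finset.mem_range.mp hi)) htk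
    rw [Nat.cast_sub this]
  have hc : (t.choose k : ℝ) = (∏ i ∈ Finset.range k, ((t : ℝ) - i)) / (k.factorial : ℝ) := by
    rw [← hd, eq_div_iff hfac]
    exact_mod_cast (by rw [Nat.descFactorial_eq_factorial_mul_choose, Nat.mul_comm] :
      t.descFactorial k = t.choose k * k.factorial).symm
  have hsplit : ∏ i ∈ Finset.range k, (1 - (i : ℝ) / (t : ℝ))
      = (∏ i ∈ Finset.range k, ((t : ℝ) - i)) / (t : ℝ) ^ k := by
    have heach : ∀ i ∈ Finset.range k, (1 - (i : ℝ) / (t : ℝ)) = ((t : ℝ) - i) / (t : ℝ) := by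
      intro i _
      field_simp
    rw [Finset.prod_congr rfl heach, Finset.prod_div_distrib, Finset.prod_const,
      Finset.card_range]
  rw [hc, hsplit]
  ring

/-- The number of compositions of `t` with exactly `n` parts greater than `1`,
divided by `t ^ (2n)`, tends to `1 / (2n)!` as `t → ∞`. -/
theorem composition_exact_n_large_parts_depth_one_asymptotic (n : ℕ) :
    Tendsto (fun t : ℕ => (compCountExact t n 1 : ℝ) / (t : ℝ) ^ (2 * n))
      atTop (nhds (1 / ((2 * n).factorial : ℝ))) := by
  have h := tendsto_choose_div_pow (2 * n)
  refine h.congr (fun t => ?_)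
  rw [compCountExact_eq_choose]
end

section
/- Let D ≥ 2 and t ≥ 1 be integers. Then the number of compositions of t with all parts at most D equals ⌊d_D · α_D^t + 1/2⌋, where α_D is the unique positive real root of z^D − z^{D−1} − ⋯ − z − 1 and d_D = (α_D − 1)/(2 + (D+1)(α_D − 2)). -/
open Finset Filter

lemma CCLR.blocks_ne_nil {t : ℕ} (ht : 1 ≤ t) (c : Composition t) : c.blocks ≠ [] := by
  intro h
  have hs := c.blocks_sum
  rw [h] at hs
  simp at hs
  omega

lemma CCLR.headI_cons_tail {t : ℕ} (ht : 1 ≤ t) (c : Composition t) :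
    c.blocks.headI :: c.blocks.tail = c.blocks := by
  obtain ⟨b, L, hbl⟩ := List.exists_cons_of_ne_nil (CCLR.blocks_ne_nil ht c)
  rw [hbl]; rfl

lemma CCLR.tail_sum {t k : ℕ} (ht : 1 ≤ t) (c : Composition t) (hk : c.blocks.headI = k) :
    c.blocks.tail.sum = t - k ∧ k ≤ t := by
  have hs := c.blocks_sum
  rw [← CCLR.headI_cons_tail ht c, List.sum_cons, hk] at hs
  omega

/-- All parts of a composition of `t ≤ D` are at most `D`, so the count is `2^(t-1)`. -/
lemma CCLR.compCountLe_all (t D : ℕ) (h : t ≤ D) : compCountLe t D = 2 ^ (t - 1) := by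
  rw [compCountLe]
  rw [Finset.filter_true_of_mem, Finset.card_univ, composition_card]
  intro c _ p hp
  calc p ≤ c.blocks.sum := List.single_le_sum (fun x _ => Nat.zero_le x) p hp
  _ = t := c.blocks_sum
  _ ≤ D := h

/-- The basic recurrence, by splitting off the first part. -/
lemma CCLR.compCountLe_rec (t D : ℕ) (hD : 1 ≤ D) (h : D ≤ t) :
    compCountLe t D = ∑ k ∈ Finset.Icc 1 D, compCountLe (t - k) D := by
  classical
  have ht : 1 ≤ t := le_trans hD h
  rw [compCountLe]
  rw [Finset.card_eq_sum_card_fiberwise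
    (f := fun c : Composition t => c.blocks.headI) (t := Finset.Icc 1 D) ?_]
  · refine Finset.sum_congr rfl fun k hk => ?_
    simp only [Finset.mem_Icc] at hk
    rw [Finset.filter_filter, compCountLe]
    refine Finset.card_bij'
      (fun c hc => (⟨c.blocks.tail,
        fun hi => c.blocks_pos (List.mem_of_mem_tail hi), by
          have hc' := (Finset.mem_filter.1 hc).2
          exact (CCLR.tail_sum ht c hc'.2).1⟩ : Composition (t - k)))
      (fun c _ => (⟨k :: c.blocks, by
          intro i hi
          rcases List.mem_cons.1 hi with h1 | h2
          · omega
          · exact c.blocks_pos h2, by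
          simp only [List.sum_cons, c.blocks_sum]
          omega⟩ : Composition t))
      ?_ ?_ ?_ ?_
    · intro c hc
      simp only [Finset.mem_filter, Finset.mem_univ, true_and] at hc ⊢
      intro p hp
      exact hc.1 p (List.mem_of_mem_tail hp)
    · intro c hc
      simp only [Finset.mem_filter, Finset.mem_univ, true_and] at hc ⊢
      constructor
      · intro p hp
        rcases List.mem_cons.1 hp with h1 | h2
        · omega
        · exact hc p h2
      · rfl
    · intro c hc
      simp only [Finset.mem_filter, Finset.mem_univ, true_and] at hc
      apply Composition.ext
      simp only
      rw [← hc.2]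
      exact CCLR.headI_cons_tail ht c
    · intro c hc
      apply Composition.ext
      rfl
  · intro c hc
    simp only [Finset.mem_coe, Finset.mem_filter] at hc
    have hm : c.blocks.headI ∈ c.blocks := by
      rw [← CCLR.headI_cons_tail ht c]; exact List.mem_cons_self
    simp only [Finset.mem_coe, Finset.mem_Icc]
    exact ⟨c.blocks_pos hm, hc.2 _ hm⟩

/-- Quadratic upper bound complementing Bernoulli's inequality. -/
lemma CCLR.pow_one_sub_le (x : ℝ) (hx0 : 0 ≤ x) (hx1 : x ≤ 1) (n : ℕ) :
    (1 - x) ^ n ≤ 1 - n * x + n * (n - 1 : ℝ) * x ^ 2 / 2 := by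
  induction n with
  | zero => norm_num
  | succ n ih =>
    have h1 : (0:ℝ) ≤ 1 - x := by linarith
    have h2 : (1 - x) ^ (n+1) = (1-x)^n * (1-x) := pow_succ _ _
    have h3 : (1-x)^n * (1-x) ≤ (1 - n*x + n*(n-1:ℝ)*x^2/2) * (1-x) :=
      mul_le_mul_of_nonneg_right ih h1
    rw [h2]
    refine le_trans h3 ?_
    have hnn : (0:ℝ) ≤ (n:ℝ) * ((n:ℝ) - 1) := by
      rcases Nat.eq_zero_or_pos n with rfl | hpos
      · simp
      · have h1 : (1:ℝ) ≤ (n:ℝ) := by exact_mod_cast hpos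
        nlinarith
    push_cast
    nlinarith [mul_nonneg hnn (mul_nonneg (mul_nonneg hx0 hx0) hx0)]

/-- `E² + 7E + 8 ≤ 2^(E+3)` for `E ≥ 1`. -/
lemma CCLR.nat_key (E : ℕ) (hE : 1 ≤ E) : E^2 + 7*E + 8 ≤ 2^(E+3) := by
  induction E, hE using Nat.le_induction with
  | base => norm_num
  | succ n hn ih =>
    have key : (n+1)^2 + 7*(n+1) + 8 ≤ 2*(n^2+7*n+8) := by nlinarith
    calc (n+1)^2 + 7*(n+1) + 8 ≤ 2*(n^2+7*n+8) := key
    _ ≤ 2*2^(n+3) := Nat.mul_le_mul_left 2 ih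
    _ = 2^(n+1+3) := by rw [show n+1+3 = (n+3)+1 from rfl, pow_succ]; ring

set_option maxHeartbeats 3200000 in
/-- Equation (3) of the paper: for `D ≥ 2` and `t ≥ 1`, the number of compositions of `t`
with all parts at most `D` equals `⌊d_D α_D^t + 1/2⌋`, where `α_D` is the unique positive
root of `z^D - z^(D-1) - ⋯ - z - 1` and `d_D = (α_D - 1)/(2 + (D+1)(α_D - 2))`. -/
theorem compCountLe_eq_round (D t : ℕ) (hD : 2 ≤ D) (ht : 1 ≤ t) (α d : ℝ)
    (hα : 0 < α) (hroot : α ^ D = ∑ i ∈ Finset.range D, α ^ i)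
    (hd : d = (α - 1) / (2 + (D + 1) * (α - 2))) :
    (compCountLe t D : ℤ) = ⌊d * α ^ t + 1 / 2⌋ := by
  have hDR : (2:ℝ) ≤ (D:ℝ) := by exact_mod_cast hD
  -- ### basic facts about α
  have hα1 : 1 < α := by
    by_contra hle
    push_neg at hle
    have h1 : ∀ i ∈ range D, α ^ D ≤ α ^ i := by
      intro i hi
      exact pow_le_pow_of_le_one hα.le hle (by simp at hi; omega)
    have h2 : (D:ℝ) * α ^ D ≤ ∑ i ∈ range D, α ^ i := by
      calc (D:ℝ) * α ^ D = ∑ _i ∈ range D, α ^ D := by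
            rw [Finset.sum_const, Finset.card_range, nsmul_eq_mul]
      _ ≤ _ := Finset.sum_le_sum h1
    rw [← hroot] at h2
    nlinarith [pow_pos hα D]
  obtain ⟨ε, hεdef⟩ : ∃ e : ℝ, e = 2 - α := ⟨_, rfl⟩
  have hkey : α ^ D * ε = 1 := by
    have h := geom_sum_mul α D
    rw [← hroot] at h
    rw [hεdef]
    linear_combination -h
  have hε0 : 0 < ε := by nlinarith only [hkey, pow_pos hα D]
  have hα2 : α < 2 := by
    rw [hεdef] at hε0
    linarith only [hε0]
  have hαD : (D:ℝ) < α ^ D := by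
    have h1 : ∀ i ∈ range D, (1:ℝ) ≤ α ^ i := fun i _ => one_le_pow₀ hα1.le
    have h2 : ∑ i ∈ range D, (1:ℝ) < ∑ i ∈ range D, α ^ i := by
      refine Finset.sum_lt_sum h1 ⟨1, Finset.mem_range.2 (by omega), ?_⟩
      simpa using hα1
    rw [← hroot, Finset.sum_const, Finset.card_range, nsmul_eq_mul, mul_one] at h2
    exact h2
  have hεD : ε * D < 1 := by
    calc ε * D < ε * α ^ D := by apply mul_lt_mul_of_pos_left hαD hε0
    _ = 1 := by rw [mul_comm]; exact hkey
  have hα32 : 2 - 1/(D:ℝ) < α := by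
    have hD0 : (0:ℝ) < D := by linarith
    have hε1D : ε < 1/(D:ℝ) := (lt_div_iff₀ hD0).mpr hεD
    simp only [hεdef] at hε1D
    linarith
  have hεhalf : ε < 1/2 := by
    have hD0 : (0:ℝ) < D := by linarith
    have hε1D : ε < 1/(D:ℝ) := (lt_div_iff₀ hD0).mpr hεD
    have : 1/(D:ℝ) ≤ 1/2 := by
      rw [div_le_div_iff₀ (by linarith) (by norm_num)]
      linarith
    linarith
  have h2D : (2:ℝ) ^ (D-1) < α ^ D := by
    have h1 : (2:ℝ) - 1/D > 0 := by
      have hD0 : (0:ℝ) < D := by linarith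
      rw [gt_iff_lt, sub_pos, div_lt_iff₀ hD0]; linarith only [hDR]
    have h3 : (1:ℝ) + (D:ℝ) * (-(1/(2*D))) ≤ (1 + (-(1/(2*D)))) ^ D := by
      apply one_add_mul_le_pow
      rw [neg_le, neg_neg]
      rw [div_le_iff₀ (by positivity)]
      linarith
    have h4 : (1:ℝ) + (D:ℝ) * (-(1/(2*D))) = 1/2 := by
      field_simp
      ring
    have h5 : ((2:ℝ) - 1/D) ^ D = 2 ^ D * (1 + (-(1/(2*D)))) ^ D := by
      rw [← mul_pow]
      congr 1
      field_simp
      ring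
    have h6 : (2:ℝ) ^ D * (1/2) ≤ (2 - 1/D)^D := by
      rw [h5]
      apply mul_le_mul_of_nonneg_left _ (by positivity)
      rw [← h4]; exact h3
    have h7 : (2:ℝ) ^ D * (1/2) = 2 ^ (D-1) := by
      rw [show D = (D-1)+1 by omega]
      rw [show (D-1)+1-1 = D-1 by omega, pow_succ]
      ring
    have h8 : ((2:ℝ) - 1/D) ^ D < α ^ D := by
      apply pow_lt_pow_left₀ hα32 h1.le (by omega)
    linarith
  -- ### facts about d
  have hden : (0:ℝ) < α - D * ε := by linarith only [hα1, hεD]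
  have hd2 : d * (α - D * ε) = α - 1 := by
    have hsame : (2:ℝ) + (D + 1) * (α - 2) = α - D * ε := by
      simp only [hεdef]
      ring
    rw [hd, hsame, div_mul_cancel₀ _ (ne_of_gt hden)]
  have hdpos : 0 < d := by
    nlinarith only [hd2, hden, hα1]
  have hdhalf : 1/2 ≤ d := by
    nlinarith only [hd2, hden, hεdef,
      mul_nonneg (by linarith only [hDR] : (0:ℝ) ≤ (D:ℝ) - 1) hε0.le]
  have hd1 : d ≤ 1 := by nlinarith only [hd2, hden, hεD, hα1]
  -- ### introduce E with D = E + 1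
  obtain ⟨E, rfl⟩ : ∃ E, D = E + 1 := ⟨D - 1, by omega⟩
  have hE1 : 1 ≤ E := by omega
  have hER : (1:ℝ) ≤ (E:ℝ) := by exact_mod_cast hE1
  have hcastD : ((E:ℝ) + 1) = ((E + 1 : ℕ) : ℝ) := by push_cast; ring
  -- ### the sequence a and its properties
  obtain ⟨a, haeq⟩ : ∃ a : ℕ → ℝ, ∀ m, a m = (compCountLe m (E+1) : ℝ) :=
    ⟨_, fun _ => rfl⟩
  have ha0 : a 0 = 1 := by
    rw [haeq, CCLR.compCountLe_all 0 (E+1) (by omega)]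
    norm_num
  have haval : ∀ m, 1 ≤ m → m ≤ E + 1 → a m = 2 ^ (m - 1) := by
    intro m h1 h2
    rw [haeq, CCLR.compCountLe_all m (E+1) h2]
    push_cast
    ring
  have haRec : ∀ s, E + 1 ≤ s → a s = ∑ k ∈ Finset.Icc 1 (E+1), a (s - k) := by
    intro s hs
    rw [haeq, CCLR.compCountLe_rec s (E+1) (by omega) hs]
    push_cast
    exact Finset.sum_congr rfl fun k _ => (haeq _).symm
  have haDouble : ∀ m, 1 ≤ m → m + 1 ≤ E + 1 → a (m + 1) = 2 * a m := by
    intro m h1 h2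
    rw [haval m h1 (by omega), haval (m+1) (by omega) h2]
    rw [show m + 1 - 1 = (m - 1) + 1 by omega, pow_succ]
    ring
  -- ### the sequence g
  obtain ⟨g, hg_def⟩ : ∃ g : ℕ → ℝ, ∀ j, g j = 1 - ε * α ^ j := ⟨_, fun _ => rfl⟩
  have hgstep : ∀ j, α * g j - g (j+1) = α - 1 := by
    intro j
    simp only [hg_def, pow_succ]
    ring
  have hg0 : g 0 = α - 1 := by simp only [hg_def, pow_zero]; simp only [hεdef]; ring
  have hgElast : α * g E = α - 1 := by
    simp only [hg_def]
    have : α * (ε * α ^ E) = α ^ (E+1) * ε := by ring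
    have h2 : α * (1 - ε * α ^ E) = α - α ^ (E+1) * ε := by rw [mul_sub, this]; ring
    rw [h2, hkey]
  have hgpos : ∀ j, j ≤ E → 0 < g j := by
    intro j hj
    simp only [hg_def]
    have h1 : α ^ j ≤ α ^ E := pow_le_pow_right₀ hα1.le hj
    have h2 : ε * α ^ E * α = 1 := by
      rw [show ε * α ^ E * α = α ^ (E+1) * ε by ring, hkey]
    have h3 : ε * α ^ E < 1 := by
      nlinarith only [h2, hα1, mul_pos hε0 (pow_pos hα E)]
    nlinarith only [h1, h3, hε0, pow_pos hα j]
  have hgdec : ∀ j, g j - g (j+1) = ε * α ^ j * (α - 1) := by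
    intro j
    simp only [hg_def, pow_succ]
    ring
  -- ### U s = (α-1) α^s
  obtain ⟨U, hU_def⟩ : ∃ U : ℕ → ℝ, ∀ s, U s = ∑ j ∈ range (E+1), g j * a (s - j) :=
    ⟨_, fun _ => rfl⟩
  have hUbase : U E = (α - 1) * α ^ E := by
    simp only [hU_def]
    rw [Finset.sum_range_succ]
    have he : ∀ j ∈ range E, g j * a (E - j) = 2^(E-1-j) - ε * (α^j * 2^(E-1-j)) := by
      intro j hj
      simp only [Finset.mem_range] at hj
      rw [haval (E - j) (by omega) (by omega)]
      rw [show E - j - 1 = E - 1 - j by omega]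
      simp only [hg_def]
      ring
    rw [Finset.sum_congr rfl he]
    rw [Finset.sum_sub_distrib]
    have hgeo1 : ∑ j ∈ range E, (2:ℝ)^(E-1-j) = 2^E - 1 := by
      rw [Finset.sum_range_reflect (fun j => (2:ℝ)^j) E]
      have h2 := geom_sum_mul (2:ℝ) E
      linear_combination h2
    have hgeo2 : ∑ j ∈ range E, ε * (α^j * (2:ℝ)^(E-1-j)) = 2^E - α^E := by
      rw [← Finset.mul_sum]
      have := geom_sum₂_mul α (2:ℝ) E
      have h2 : ε * ∑ i ∈ range E, α ^ i * (2:ℝ)^(E-1-i) = -(α ^ E - 2 ^ E) := by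
        rw [← this]
        simp only [hεdef]
        ring
      rw [h2]
      ring
    rw [hgeo1, hgeo2, Nat.sub_self, ha0, hg_def E, hεdef]
    ring
  have hUstep : ∀ s, E + 1 ≤ s → U s = α * U (s - 1) := by
    intro s hs
    set S2 : ℝ := ∑ j ∈ range E, g j * a (s - 1 - j) with hS2
    set S3 : ℝ := ∑ j ∈ range E, a (s - 1 - j) with hS3
    have e1 : U s = (∑ j ∈ range E, g (j+1) * a (s - 1 - j)) + g 0 * a s := by
      rw [hU_def s, Finset.sum_range_succ', Nat.sub_zero]
      congr 1
      exact Finset.sum_congr rfl fun j hj => by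
        rw [show s - (j+1) = s - 1 - j by omega]
    have e2 : U (s-1) = S2 + g E * a (s - (E+1)) := by
      rw [hU_def (s-1), Finset.sum_range_succ, show s - 1 - E = s - (E+1) by omega]
    have e3 : (∑ j ∈ range E, g (j+1) * a (s - 1 - j)) = α * S2 - (α - 1) * S3 := by
      have : ∀ j ∈ range E, g (j+1) * a (s-1-j)
          = α * (g j * a (s-1-j)) - (α-1) * a (s-1-j) := by
        intro j hj
        linear_combination (-(a (s-1-j))) * hgstep j
      rw [Finset.sum_congr rfl this, Finset.sum_sub_distrib, ← Finset.mul_sum, ← Finset.mul_sum]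
    have e4 : a s = S3 + a (s - (E+1)) := by
      rw [haRec s hs, ← Finset.Ico_add_one_right_eq_Icc, Finset.sum_Ico_eq_sum_range]
      rw [show E + 1 + 1 - 1 = E + 1 by omega]
      rw [Finset.sum_range_succ]
      congr 1
      · refine Finset.sum_congr rfl fun j hj => ?_
        rw [show s - (1 + j) = s - 1 - j by omega]
      · rw [show s - (1 + E) = s - (E+1) by omega]
    rw [e1, e2, e3, e4, hg0]
    linear_combination (-(a (s - (E+1)))) * hgElast
  have hU : ∀ s, E ≤ s → U s = (α - 1) * α ^ s := by
    intro s hs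
    induction s, hs using Nat.le_induction with
    | base => exact hUbase
    | succ n hn ih =>
        have h1 := hUstep (n+1) (by omega)
        rw [show n + 1 - 1 = n by omega] at h1
        rw [h1, ih, pow_succ]
        ring
  -- ### sum of g j α^(s-j)
  have hgα : ∀ s, E ≤ s → ∑ j ∈ range (E+1), g j * α ^ (s - j)
      = (α - (E+1) * ε) * α ^ s := by
    intro s hs
    have he : ∀ j ∈ range (E+1), g j * α ^ (s - j)
        = α ^ (s-E) * (α ^ (E-j) - ε * α ^ E) := by
      intro j hj
      simp only [Finset.mem_range] at hj
      have hj' : j ≤ E := by omega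
      have h1 : α ^ (s - j) = α ^ (s-E) * α ^ (E-j) := by
        rw [← pow_add]
        congr 1
        omega
      have h2 : α ^ j * α ^ (E - j) = α ^ E := by
        rw [← pow_add]
        congr 1
        omega
      rw [hg_def j, h1]
      linear_combination (-(ε * α^(s-E))) * h2
    rw [Finset.sum_congr rfl he, ← Finset.mul_sum, Finset.sum_sub_distrib]
    have hgeo : ∑ j ∈ range (E+1), α ^ (E - j) = α ^ (E+1) := by
      have hr := Finset.sum_range_reflect (fun j => α^j) (E+1)
      have : ∀ j ∈ range (E+1), α ^ (E + 1 - 1 - j) = α ^ (E - j) := by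
        intro j hj
        congr 1 <;> omega
      rw [← Finset.sum_congr rfl this, hr, ← hroot]
    rw [hgeo, Finset.sum_const, Finset.card_range, nsmul_eq_mul]
    have hsplit : α ^ s = α ^ (s - E) * α ^ E := by
      rw [← pow_add]
      congr 1
      omega
    rw [hsplit, pow_succ]
    push_cast
    ring
  -- ### the error sequence r
  obtain ⟨r, hr_def⟩ : ∃ r : ℕ → ℝ, ∀ m, r m = a m - d * α ^ m := ⟨_, fun _ => rfl⟩
  have hT : ∀ s, E ≤ s → ∑ j ∈ range (E+1), g j * r (s - j) = 0 := by
    intro s hs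
    have he : ∀ j ∈ range (E+1), g j * r (s - j)
        = g j * a (s - j) - d * (g j * α ^ (s - j)) := by
      intro j hj
      simp only [hr_def]
      ring
    rw [Finset.sum_congr rfl he, Finset.sum_sub_distrib, ← Finset.mul_sum]
    rw [hgα s hs]
    have h1 := hU s hs
    rw [hU_def s] at h1
    rw [h1]
    have h2 : d * (α - (E+1) * ε) = α - 1 := by
      rw [← hd2]
      congr 2
      push_cast
      ring
    linear_combination (-(α ^ s)) * h2
  -- ### convex combination identity for s ≥ E+1
  have hconv : ∀ s, E + 1 ≤ s →
      (α - 1) * r s = (∑ j ∈ range E, (g j - g (j+1)) * r (s - 1 - j))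
        + g E * r (s - (E+1)) := by
    intro s hs
    have h1 := hT s (by omega)
    have h2 := hT (s-1) (by omega)
    rw [Finset.sum_range_succ'] at h1
    rw [Finset.sum_range_succ] at h2
    have e1 : ∀ j ∈ range E, g (j+1) * r (s - (j+1)) = g (j+1) * r (s - 1 - j) := by
      intro j hj
      rw [show s - (j+1) = s - 1 - j by omega]
    have e2 : ∀ j ∈ range E, g j * r (s - 1 - j) = g j * r (s-1-j) := fun _ _ => rfl
    rw [Finset.sum_congr rfl e1] at h1
    rw [Nat.sub_zero] at h1
    rw [show s - 1 - E = s - (E+1) by omega] at h2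
    rw [← hg0]
    have expand : ∑ j ∈ range E, (g j - g (j+1)) * r (s - 1 - j)
        = (∑ j ∈ range E, g j * r (s-1-j)) - ∑ j ∈ range E, g (j+1) * r (s-1-j) := by
      rw [← Finset.sum_sub_distrib]
      refine Finset.sum_congr rfl fun j hj => ?_
      ring
    rw [expand]
    linarith only [h1, h2]
  -- ### bounds on the initial window
  have hr0 : 0 ≤ r 0 ∧ r 0 ≤ 1/2 := by
    simp only [hr_def, pow_zero, mul_one, ha0]
    constructor <;> linarith only [hdhalf, hd1]
  -- key power facts
  have hαE1 : α ^ (E+1) * ε = 1 := hkey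
  have hαE : ε * α ^ E * α = 1 := by
    rw [show ε * α ^ E * α = α ^ (E+1) * ε by ring]; exact hkey
  have hε2E : ε * 2 ^ E < 1 := by
    have : (2:ℝ) ^ (E+1-1) = 2 ^ E := by norm_num
    rw [this] at h2D
    calc ε * 2^E < ε * α ^ (E+1) := by apply mul_lt_mul_of_pos_left h2D hε0
    _ = 1 := by rw [mul_comm]; exact hkey
  -- the two crucial bounds for r E
  have haE : a E = 2 ^ (E-1) := haval E hE1 (by omega)
  have hZpos : (0:ℝ) < 1 - ((E:ℝ)+2) * ε / 2 := by
    have h1 : ((E:ℝ)+1) * ε < 1 := by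
      have := hεD
      push_cast at this ⊢
      linarith only [this, mul_comm ε ((E:ℝ)+1)]
    linarith only [h1, hεhalf]
  have hcpos : (0:ℝ) < 2 - ((E:ℝ)+2) * ε := by linarith only [hZpos]
  have hBern : 1 - (E:ℝ) * (ε/2) ≤ (1 - ε/2) ^ E := by
    have := one_add_mul_le_pow (a := -(ε/2)) (by linarith only [hε0, hεhalf]) E
    calc 1 - (E:ℝ) * (ε/2) = 1 + (E:ℝ) * (-(ε/2)) := by ring
    _ ≤ (1 + -(ε/2)) ^ E := this
    _ = (1 - ε/2) ^ E := by rw [show (1:ℝ) + -(ε/2) = 1 - ε/2 by ring]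
  have hpowsplit : (2:ℝ)^E * (1 - ε/2)^E = α ^ E := by
    rw [← mul_pow]
    congr 1
    simp only [hεdef]
    ring
  have hrE_le : r E ≤ 0 := by
    -- 2^(E-1) ≤ d α^E
    have hX : 1 - ((E:ℝ)+2) * ε / 2 ≤ (1-ε) * (1-ε/2)^E := by
      have h1 : (1-ε) * (1 - (E:ℝ)*(ε/2)) ≤ (1-ε) * (1-ε/2)^E :=
        mul_le_mul_of_nonneg_left hBern (by linarith only [hεhalf, hε0])
      nlinarith only [h1, mul_nonneg hε0.le (mul_nonneg hε0.le
        (by linarith only [hER] : (0:ℝ) ≤ (E:ℝ)))]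
    have h2 : (2:ℝ)^E * (1 - ((E:ℝ)+2) * ε / 2) ≤ (1-ε) * α ^ E := by
      calc (2:ℝ)^E * (1 - ((E:ℝ)+2) * ε / 2) ≤ 2^E * ((1-ε) * (1-ε/2)^E) :=
            mul_le_mul_of_nonneg_left hX (by positivity)
      _ = (1-ε) * (2^E * (1-ε/2)^E) := by ring
      _ = (1-ε) * α ^ E := by rw [hpowsplit]
    have h3 : (1-ε) * α ^ E = d * α ^ E * (2 - ((E:ℝ)+2)*ε) := by
      have : d * (α - (E+1:ℕ) * ε) = α - 1 := hd2
      push_cast at this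
      have hα1ε : α - 1 = 1 - ε := by simp only [hεdef]; ring
      have hαsub : α - ((E:ℝ)+1) * ε = 2 - ((E:ℝ)+2) * ε := by
        simp only [hεdef]; ring
      rw [hαsub] at this
      rw [← hα1ε]
      linear_combination (-(α ^ E)) * this
    have h4 : (2:ℝ)^E * (1 - ((E:ℝ)+2) * ε / 2) = 2^(E-1) * (2 - ((E:ℝ)+2)*ε) := by
      rw [show E = (E-1)+1 by omega]
      rw [show (E-1)+1-1 = E-1 by omega, pow_succ]
      ring
    have h5 : (2:ℝ)^(E-1) * (2 - ((E:ℝ)+2)*ε) ≤ d * α^E * (2 - ((E:ℝ)+2)*ε) := by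
      rw [← h4, ← h3]; exact h2
    have h6 : (2:ℝ)^(E-1) ≤ d * α^E := le_of_mul_le_mul_right h5 hcpos
    rw [hr_def E, haE]
    linarith only [h6]
  have hrE_gt : -(1/2) < r E := by
    -- d α^E < 2^(E-1) + 1/2
    have hUB : (1 - ε/2)^E ≤ 1 - (E:ℝ)*(ε/2) + (E:ℝ)*((E:ℝ)-1)*(ε/2)^2/2 :=
      CCLR.pow_one_sub_le (ε/2) (by linarith only [hε0]) (by linarith only [hεhalf]) E
    have hN : (1-ε) * (1-ε/2)^E
        ≤ (1 - ((E:ℝ)+2)*ε/2) + (E:ℝ)*((E:ℝ)+3)*ε^2/8 := by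
      have h1 : (1-ε) * (1-ε/2)^E
          ≤ (1-ε) * (1 - (E:ℝ)*(ε/2) + (E:ℝ)*((E:ℝ)-1)*(ε/2)^2/2) :=
        mul_le_mul_of_nonneg_left hUB (by linarith only [hεhalf, hε0])
      have hEnn : (0:ℝ) ≤ (E:ℝ) := by linarith only [hER]
      have hE1R : (0:ℝ) ≤ (E:ℝ) - 1 := by linarith only [hER]
      nlinarith only [h1, mul_nonneg (mul_nonneg (mul_nonneg hEnn hE1R) hε0.le)
          (mul_nonneg hε0.le hε0.le)]
    have hkeyE : ((E:ℝ)^2 + 7*(E:ℝ) + 8) * ε < 8 := by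
      have hnat := CCLR.nat_key E hE1
      have hnatR : ((E:ℝ)^2 + 7*(E:ℝ) + 8) ≤ 2^(E+3) := by
        have : ((E^2 + 7*E + 8 : ℕ) : ℝ) ≤ ((2^(E+3) : ℕ) : ℝ) := by exact_mod_cast hnat
        push_cast at this
        linarith only [this]
      have h8 : (2:ℝ)^(E+3) * ε < 8 := by
        have he8 : (2:ℝ)^(E+3) = 8 * 2^E := by rw [pow_add]; ring
        rw [he8]
        linarith only [hε2E, mul_comm ε ((2:ℝ)^E)]
      nlinarith only [h8, mul_le_mul_of_nonneg_right hnatR hε0.le]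
    have hZ2 : (E:ℝ)*((E:ℝ)+3)*ε/8 < 1 - ((E:ℝ)+2)*ε/2 := by linarith only [hkeyE]
    have hZ3 : (E:ℝ)*((E:ℝ)+3)*ε^2/8 < ε * (1 - ((E:ℝ)+2)*ε/2) := by
      have hm := mul_lt_mul_of_pos_left hZ2 hε0
      nlinarith only [hm]
    have hN2 : (1-ε) * (1-ε/2)^E < (1 - ((E:ℝ)+2)*ε/2) + ε * (1 - ((E:ℝ)+2)*ε/2) := by
      linarith only [hN, hZ3]
    have h2E : (1-ε) * α^E < ((2:ℝ)^E + 1) * (1 - ((E:ℝ)+2)*ε/2) := by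
      have h1 : (2:ℝ)^E * ((1-ε) * (1-ε/2)^E)
          < 2^E * ((1 - ((E:ℝ)+2)*ε/2) + ε * (1 - ((E:ℝ)+2)*ε/2)) :=
        mul_lt_mul_of_pos_left hN2 (by positivity)
      have h2 : (2:ℝ)^E * ((1-ε) * (1-ε/2)^E) = (1-ε) * α ^ E := by
        rw [← hpowsplit]; ring
      have h3 : (2:ℝ)^E * ε * (1 - ((E:ℝ)+2)*ε/2) < 1 * (1 - ((E:ℝ)+2)*ε/2) := by
        apply mul_lt_mul_of_pos_right _ hZpos
        linarith only [hε2E, mul_comm ε ((2:ℝ)^E)]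
      nlinarith only [h1, h2, h3]
    have h3 : (1-ε) * α^E = d * α ^ E * (2 - ((E:ℝ)+2)*ε) := by
      have hh : d * (α - (E+1:ℕ) * ε) = α - 1 := hd2
      push_cast at hh
      have hα1ε : α - 1 = 1 - ε := by simp only [hεdef]; ring
      have hαsub : α - ((E:ℝ)+1) * ε = 2 - ((E:ℝ)+2) * ε := by
        simp only [hεdef]; ring
      rw [hαsub] at hh
      rw [← hα1ε]
      linear_combination (-(α ^ E)) * hh
    have h4 : ((2:ℝ)^E + 1) * (1 - ((E:ℝ)+2)*ε/2)
        = ((2:ℝ)^(E-1) + 1/2) * (2 - ((E:ℝ)+2)*ε) := by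
      rw [show E = (E-1)+1 by omega]
      rw [show (E-1)+1-1 = E-1 by omega, pow_succ]
      ring
    have h5 : d * α ^ E * (2 - ((E:ℝ)+2)*ε) < ((2:ℝ)^(E-1) + 1/2) * (2 - ((E:ℝ)+2)*ε) := by
      rw [← h4, ← h3]; exact h2E
    have h6 : d * α^E < (2:ℝ)^(E-1) + 1/2 := lt_of_mul_lt_mul_right h5 hcpos.le
    rw [hr_def E, haE]
    linarith only [h6]
  -- ### backward induction over the initial window
  have hα15 : (3:ℝ)/2 < α := by
    have : (1:ℝ)/(E+1:ℝ) ≤ 1/2 := by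
      rw [div_le_div_iff₀ (by positivity) (by norm_num)]
      push_cast
      linarith only [hER]
    push_cast at hα32
    linarith only [this, hα32]
  have hbackstep : ∀ m, 1 ≤ m → m + 1 ≤ E →
      (-(1/2) < r (m+1) ∧ r (m+1) ≤ 1/2) → (-(1/2) < r m ∧ r m ≤ 1/2) := by
    intro m h1 h2 ih
    obtain ⟨ih1, ih2⟩ := ih
    have hrel : r (m+1) = 2 * r m + d * ε * α ^ m := by
      simp only [hr_def]
      rw [haDouble m h1 (by omega), pow_succ]
      simp only [hεdef]
      ring
    have hc1 : 0 < d * ε * α ^ m := by positivity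
    have hc2 : d * ε * α ^ m < 1/2 := by
      have hεm : ε * α ^ m * α ^ 2 ≤ 1 := by
        have hle : α ^ (m + 2) ≤ α ^ (E+1) := pow_le_pow_right₀ hα1.le (by omega)
        calc ε * α ^ m * α ^ 2 = ε * α ^ (m + 2) := by rw [pow_add]; ring
        _ ≤ ε * α ^ (E+1) := by exact mul_le_mul_of_nonneg_left hle hε0.le
        _ = 1 := by rw [mul_comm]; exact hkey
      have hεα : 0 < ε * α ^ m := by positivity
      have h9 : (9:ℝ)/4 < α^2 := by nlinarith only [hα15]
      have h10 : ε*α^m*(9/4) < ε*α^m*α^2 := by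
        exact mul_lt_mul_of_pos_left h9 hεα
      have h11 : ε*α^m < 4/9 := by nlinarith only [h10, hεm]
      have h12 : d*(ε*α^m) ≤ 1*(ε*α^m) := mul_le_mul_of_nonneg_right hd1 hεα.le
      nlinarith only [h11, h12, hεα]
    constructor
    · linarith only [hrel, ih1, hc2]
    · linarith only [hrel, ih2, hc1]
  have hwin : ∀ k, -(1/2) < r (E - k) ∧ r (E - k) ≤ 1/2 := by
    intro k
    induction k with
    | zero =>
      rw [Nat.sub_zero]
      exact ⟨hrE_gt, le_trans hrE_le (by norm_num)⟩
    | succ n ih =>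
      rcases Nat.eq_zero_or_pos (E - (n+1)) with h0 | hpos
      · rw [h0]
        exact ⟨by linarith only [hr0.1], hr0.2⟩
      · have hidx : E - n = (E - (n+1)) + 1 := by omega
        rw [hidx] at ih
        exact hbackstep (E - (n+1)) hpos (by omega) ih
  -- ### main bound by strong induction
  have hmain : ∀ s, -(1/2) < r s ∧ r s ≤ 1/2 := by
    intro s
    induction s using Nat.strong_induction_on with
    | _ s IH =>
      rcases le_or_gt s E with hs | hs
      · have h := hwin (E - s)
        rwa [show E - (E - s) = s by omega] at h
      · have hcv := hconv s hs
        have hw : ∀ j ∈ range E, 0 < g j - g (j+1) := by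
          intro j hj
          rw [hgdec j]
          exact mul_pos (mul_pos hε0 (pow_pos hα j))
            (by linarith only [hα1] : (0:ℝ) < α - 1)
        have hgE : 0 < g E := hgpos E le_rfl
        have htel : ∑ j ∈ range E, (g j - g (j+1)) = g 0 - g E :=
          Finset.sum_range_sub' g E
        have hup : (α-1) * r s ≤ (α-1) * (1/2) := by
          rw [hcv]
          have h1 : ∀ j ∈ range E, (g j - g (j+1)) * r (s-1-j) ≤ (g j - g (j+1)) * (1/2) := by
            intro j hj
            exact mul_le_mul_of_nonneg_left (IH (s-1-j) (by omega)).2 (hw j hj).le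
          have h2 : g E * r (s - (E+1)) ≤ g E * (1/2) :=
            mul_le_mul_of_nonneg_left (IH (s-(E+1)) (by omega)).2 hgE.le
          calc (∑ j ∈ range E, (g j - g (j+1)) * r (s-1-j)) + g E * r (s-(E+1))
              ≤ (∑ j ∈ range E, (g j - g (j+1)) * (1/2)) + g E * (1/2) :=
                add_le_add (Finset.sum_le_sum h1) h2
          _ = (g 0 - g E) * (1/2) + g E * (1/2) := by rw [← Finset.sum_mul, htel]
          _ = (α-1) * (1/2) := by rw [hg0]; ring
        have hlo : (α-1) * (-(1/2)) < (α-1) * r s := by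
          rw [hcv]
          have h1 : ∀ j ∈ range E, (g j - g (j+1)) * (-(1/2)) < (g j - g (j+1)) * r (s-1-j) := by
            intro j hj
            exact mul_lt_mul_of_pos_left (IH (s-1-j) (by omega)).1 (hw j hj)
          have h2 : g E * (-(1/2)) < g E * r (s - (E+1)) :=
            mul_lt_mul_of_pos_left (IH (s-(E+1)) (by omega)).1 hgE
          have h3 : (∑ j ∈ range E, (g j - g (j+1)) * (-(1/2)))
              < ∑ j ∈ range E, (g j - g (j+1)) * r (s-1-j) :=
            Finset.sum_lt_sum_of_nonempty (Finset.nonempty_range_iff.mpr (by omega)) h1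
          calc (α-1) * (-(1/2)) = (g 0 - g E) * (-(1/2)) + g E * (-(1/2)) := by
                rw [hg0]; ring
          _ = (∑ j ∈ range E, (g j - g (j+1)) * (-(1/2))) + g E * (-(1/2)) := by
                rw [← Finset.sum_mul, htel]
          _ < (∑ j ∈ range E, (g j - g (j+1)) * r (s-1-j)) + g E * r (s-(E+1)) :=
                add_lt_add_of_lt_of_le h3 h2.le
        have hα1' : (0:ℝ) < α - 1 := by linarith only [hα1]
        constructor
        · exact (mul_lt_mul_iff_right₀ hα1').mp hlo
        · exact (mul_le_mul_iff_right₀ hα1').mp hup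
  -- ### conclusion
  obtain ⟨hl, hu⟩ := hmain t
  rw [hr_def t, haeq t] at hl hu
  symm
  rw [Int.floor_eq_iff]
  push_cast
  constructor <;> linarith only [hl, hu]
end

section
/- For every integer D ≥ 1, the unique positive real root α_D of the polynomial z^D − z^{D−1} − ⋯ − z − 1 satisfies 2(1 − 2^{−D}) ≤ α_D < 2. -/
lemma two_mul_le_two_pow (D : ℕ) : 2 * D ≤ 2 ^ D := by
  induction D with
  | zero => simp
  | succ n ih =>
    rcases Nat.eq_zero_or_pos n with h | h
    · subst h; norm_num
    · have h2 : 2 ≤ 2 ^ n := Nat.one_lt_two_pow_iff.mpr (by omega)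
      rw [pow_succ]; omega

/-- For `D ≥ 1`, the unique positive real root `α_D` of `z^D - z^(D-1) - ⋯ - z - 1`
satisfies `2(1 - 2^(-D)) ≤ α_D < 2`. -/
theorem positive_root_bounds (D : ℕ) (hD : 1 ≤ D) (α : ℝ) (hα : 0 < α)
    (hroot : α ^ D = ∑ i ∈ Finset.range D, α ^ i) :
    2 * (1 - (2 : ℝ) ^ (-(D : ℤ))) ≤ α ∧ α < 2 := by
  have hαD : (0:ℝ) < α ^ D := pow_pos hα D
  -- key identity : α^D * (2 - α) = 1
  have hgs : (∑ i ∈ Finset.range D, α ^ i) * (α - 1) = α ^ D - 1 := geom_sum_mul α D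
  have hkey : α ^ D * (2 - α) = 1 := by
    rw [← hroot] at hgs; nlinarith
  have hlt2 : α < 2 := by nlinarith
  refine ⟨?_, hlt2⟩
  -- rewrite 2^(-D)
  have hz : (2:ℝ) ^ (-(D : ℤ)) = ((2:ℝ) ^ D)⁻¹ := by
    rw [zpow_neg, zpow_natCast]
  rw [hz]
  set t : ℝ := ((2:ℝ) ^ D)⁻¹ with ht
  have h2D : (0:ℝ) < (2:ℝ) ^ D := by positivity
  have ht0 : 0 < t := by positivity
  have htD : t * (2:ℝ) ^ D = 1 := inv_mul_cancel₀ (ne_of_gt h2D)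
  set β : ℝ := 2 * (1 - t) with hβ
  have h2D' : (2:ℝ) * D ≤ (2:ℝ) ^ D := by exact_mod_cast two_mul_le_two_pow D
  have hD1 : (1:ℝ) ≤ (D:ℝ) := by exact_mod_cast hD
  have hDt : (D:ℝ) * t ≤ 1 / 2 := by
    nlinarith [mul_le_mul_of_nonneg_right h2D' (le_of_lt ht0)]
  have ht12 : t ≤ 1 / 2 := by nlinarith
  have ht1 : t < 1 := by linarith
  -- Bernoulli : (1 - t)^D ≥ 1 - D t ≥ 1/2
  have hbern : 1 - (D:ℝ) * t ≤ (1 - t) ^ D := by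
    have := one_add_mul_le_pow (a := -t) (by nlinarith) D
    have h' : (1:ℝ) + (D:ℝ) * (-t) ≤ (1 + -t) ^ D := this
    rw [← sub_eq_add_neg] at h'; linarith
  have hβpow : (1 - t) ^ D ≥ 1 / 2 := by linarith
  have hβ0 : 0 < β := by nlinarith
  have hβ1 : 1 ≤ β := by rw [hβ]; linarith
  -- β^D * (2 - β) ≥ 1
  have hβD : β ^ D = (2:ℝ) ^ D * (1 - t) ^ D := by
    rw [hβ, mul_pow]
  have hβkey : 1 ≤ β ^ D * (2 - β) := by
    have h2β : 2 - β = 2 * t := by rw [hβ]; ring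
    rw [hβD, h2β]
    nlinarith
  -- β^D ≤ ∑ β^i
  have hgsβ : (∑ i ∈ Finset.range D, β ^ i) * (β - 1) = β ^ D - 1 := geom_sum_mul β D
  have hβDpos : (0:ℝ) < β ^ D := pow_pos hβ0 D
  have hsumβ : β ^ D ≤ ∑ i ∈ Finset.range D, β ^ i := by
    rcases eq_or_lt_of_le hβ1 with h | h
    · rw [← h]; simp; exact_mod_cast hD
    · have h1 : β ^ D * (β - 1) ≤ β ^ D - 1 := by nlinarith
      rw [← hgsβ] at h1
      exact le_of_mul_le_mul_right h1 (by linarith)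
  -- by contradiction
  by_contra hab
  push_neg at hab
  have hab' : α < β := hab
  -- termwise strict comparison
  have hS : ∑ i ∈ Finset.range D, β ^ i * α ^ D < ∑ i ∈ Finset.range D, α ^ i * β ^ D := by
    apply Finset.sum_lt_sum_of_nonempty (by simp; omega)
    intro i hi
    have hiD : i < D := Finset.mem_range.mp hi
    have h1 : α ^ (D - i) < β ^ (D - i) :=
      pow_lt_pow_left₀ hab' (le_of_lt hα) (by omega)
    have eα : α ^ D = α ^ i * α ^ (D - i) := by rw [← pow_add]; congr 1; omega
    have eβ : β ^ D = β ^ i * β ^ (D - i) := by rw [← pow_add]; congr 1; omega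
    calc β ^ i * α ^ D = (α ^ i * β ^ i) * α ^ (D - i) := by rw [eα]; ring
    _ < (α ^ i * β ^ i) * β ^ (D - i) :=
        mul_lt_mul_of_pos_left h1 (by positivity)
    _ = α ^ i * β ^ D := by rw [eβ]; ring
  rw [← Finset.sum_mul, ← Finset.sum_mul, ← hroot] at hS
  have h2 : β ^ D * α ^ D ≤ (∑ i ∈ Finset.range D, β ^ i) * α ^ D :=
    mul_le_mul_of_nonneg_right hsumβ (le_of_lt hαD)
  nlinarith
end

section
/- For all integers t ≥ 1 and n ≥ 0, the number of t-tuples (ε_1, …, ε_t) with each ε_i ∈ {+1, −1} whose sequence of maximal runs of consecutive equal entries contains exactly n runs of length at least 2 is equal to 2 · C(t, 2n). -/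
namespace List

theorem splitBy_loop_append {α : Type*} (r : α → α → Bool) (l : List α) (a : α) (g : List α)
    (gs : List (List α)) : splitBy.loop r l a g gs = gs.reverse ++ splitBy.loop r l a g [] := by
  induction l generalizing a g gs with
  | nil => simp [splitBy.loop]
  | cons b l IH =>
    simp_rw [splitBy.loop]
    split <;> rw [IH]
    conv_rhs => rw [IH]
    simp

theorem splitBy_loop_g {α : Type*} (r : α → α → Bool) (l : List α) (a : α) (g : List α) :
    splitBy.loop r l a g [] = (splitBy.loop r l a [] []).modifyHead (g.reverse ++ ·) := by
  induction l generalizing a g with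
  | nil => simp [splitBy.loop]
  | cons b l IH =>
    simp_rw [splitBy.loop]
    split
    · rw [IH, IH b [a]]
      cases splitBy.loop r l b [] [] <;> simp
    · rw [splitBy_loop_append r l b [] [(a :: g).reverse],
        splitBy_loop_append r l b [] [[a].reverse]]
      simp

theorem splitBy_cons_cons {α : Type*} (r : α → α → Bool) (a b : α) (l : List α) :
    splitBy r (a :: b :: l) =
      if r a b then (splitBy r (b :: l)).modifyHead (a :: ·)
      else [a] :: splitBy r (b :: l) := by
  show splitBy.loop r (b :: l) a [] [] = _
  rw [splitBy.loop]
  rcases h : r a b with _ | _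
  · simp only [h]
    rw [splitBy_loop_append r l b [] [[a].reverse]]
    simp [splitBy]
  · simp only [h]
    rw [splitBy_loop_g r l b [a]]
    simp [splitBy]

theorem splitBy_ne_nil_of_ne_nil {α : Type*} (r : α → α → Bool) (l : List α) (h : l ≠ []) :
    splitBy r l ≠ [] := by
  intro H
  have := flatten_splitBy r l
  rw [H] at this
  exact h this.symm

end List

/-- `runStat l = (number of maximal runs of length ≥ 2, whether the first run has length ≥ 2)`. -/
def runStat : List ℤ → ℕ × Bool
  | [] => (0, false)
  | [_] => (0, false)
  | a :: b :: l =>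
    let s := runStat (b :: l)
    if a = b then (if s.2 then s.1 else s.1 + 1, true) else (s.1, false)

theorem runStat_cons_cons (a b : ℤ) (l : List ℤ) :
    runStat (a :: b :: l) =
      if a = b then (if (runStat (b :: l)).2 then (runStat (b :: l)).1
        else (runStat (b :: l)).1 + 1, true)
      else ((runStat (b :: l)).1, false) := rfl

theorem runStat_spec : ∀ l : List ℤ,
    ((l.splitBy (· == ·)).countP (fun r => 2 ≤ r.length)) = (runStat l).1 ∧
    ((runStat l).2 = decide (2 ≤ ((l.splitBy (· == ·)).headD []).length))
  | [] => by simp [runStat]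
  | [a] => by
    have : ([a] : List ℤ).splitBy (· == ·) = [[a]] := rfl
    simp [runStat, this, List.countP, List.countP.go]
  | a :: b :: l => by
    obtain ⟨h1, h2⟩ := runStat_spec (b :: l)
    have hne : (b :: l).splitBy (· == ·) ≠ [] :=
      List.splitBy_ne_nil_of_ne_nil _ _ (by simp)
    obtain ⟨g, gs, hg⟩ : ∃ g gs, (b :: l).splitBy (· == ·) = g :: gs := by
      rcases h : (b :: l).splitBy (· == ·) with _ | ⟨g, gs⟩
      · exact absurd h hne
      · exact ⟨g, gs, rfl⟩
    have hgne : g ≠ [] := by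
      intro h
      exact List.nil_notMem_splitBy (· == ·) (b :: l) (hg ▸ (h ▸ (List.mem_cons_self : g ∈ g :: gs)))
    have hglen : 1 ≤ g.length := List.length_pos_iff.2 hgne
    rw [runStat_cons_cons, List.splitBy_cons_cons, hg]
    rw [hg, List.headD_cons] at h2
    rw [hg, List.countP_cons] at h1
    by_cases hab : a = b
    · subst hab
      simp only [beq_self_eq_true, if_true, List.modifyHead_cons, List.headD_cons,
        List.countP_cons]
      have hd1 : decide (2 ≤ (a :: g).length) = true := by
        simp only [List.length_cons, decide_eq_true_eq]
        omega
      refine ⟨?_, by rw [hd1]⟩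
      rw [hd1, h2]
      rcases hgl : decide (2 ≤ g.length) with _ | _ <;>
        rw [hgl] at h1 <;> simp_all
    · have hb : (a == b) = false := by simpa using hab
      rw [hb]
      simp only [Bool.false_eq_true, if_false, if_neg hab, List.countP_cons,
        List.headD_cons]
      constructor
      · rw [h1]
        simp
      · simp

abbrev SX : Finset ℤ := {1, -1}

def Lz {t : ℕ} (ε : Fin t → SX) : List ℤ := List.ofFn fun i => (ε i : ℤ)

theorem SX_mem_iff (x : ℤ) : x ∈ SX ↔ x = 1 ∨ x = -1 := by simp [SX]

def negX (x : SX) : SX :=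
  ⟨-(x : ℤ), by rcases (SX_mem_iff _).1 x.2 with h | h <;> simp [SX, h]⟩

theorem negX_ne (x : SX) : ((negX x : ℤ)) ≠ (x : ℤ) := by
  rcases (SX_mem_iff _).1 x.2 with h | h <;> simp [negX, h] <;> omega

theorem eq_negX_of_ne {x y : SX} (h : (x : ℤ) ≠ (y : ℤ)) : x = negX y := by
  rcases (SX_mem_iff _).1 x.2 with h1 | h1 <;> rcases (SX_mem_iff _).1 y.2 with h2 | h2 <;>
    apply Subtype.ext <;> simp [negX, h1, h2] <;> simp [h1, h2] at h <;> omega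

theorem eq_of_coe_eq {x y : SX} (h : (x : ℤ) = (y : ℤ)) : x = y := Subtype.ext h

theorem Lz_cons {t : ℕ} (x : SX) (δ : Fin t → SX) :
    Lz (Fin.cons x δ) = (x : ℤ) :: Lz δ := by
  simp [Lz, List.ofFn_succ, Fin.cons_zero, Fin.cons_succ]

theorem Lz_eq_cons {t : ℕ} (ε : Fin (t + 1) → SX) :
    Lz ε = (ε 0 : ℤ) :: Lz (Fin.tail ε) := by
  simp [Lz, List.ofFn_succ, Fin.tail]

theorem runStat_Lz {t : ℕ} (ε : Fin (t + 2) → SX) :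
    runStat (Lz ε) =
      if (ε 0 : ℤ) = (ε 1 : ℤ) then
        (if (runStat (Lz (Fin.tail ε))).2 then (runStat (Lz (Fin.tail ε))).1
          else (runStat (Lz (Fin.tail ε))).1 + 1, true)
      else ((runStat (Lz (Fin.tail ε))).1, false) := by
  rw [Lz_eq_cons ε, Lz_eq_cons (Fin.tail ε), runStat_cons_cons, ← Lz_eq_cons (Fin.tail ε)]
  rfl

def cntA (t n : ℕ) : ℕ :=
  ((Finset.univ : Finset (Fin t → SX)).filter fun ε => runStat (Lz ε) = (n, false)).card

def cntB (t n : ℕ) : ℕ :=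
  ((Finset.univ : Finset (Fin t → SX)).filter fun ε => runStat (Lz ε) = (n, true)).card

theorem filter_fst_card (t n : ℕ) :
    ((Finset.univ : Finset (Fin t → SX)).filter fun δ => (runStat (Lz δ)).1 = n).card
      = cntA t n + cntB t n := by
  rw [cntA, cntB]
  have h : ∀ δ : Fin t → SX, ((runStat (Lz δ)).1 = n) ↔
      (runStat (Lz δ) = (n, false) ∨ runStat (Lz δ) = (n, true)) := by
    intro δ
    rcases hs : runStat (Lz δ) with ⟨c, b⟩
    cases b <;> simp [Prod.ext_iff] <;> tauto
  rw [Finset.filter_congr (fun δ _ => h δ), Finset.filter_or]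
  apply Finset.card_union_of_disjoint
  apply Finset.disjoint_filter_filter'
  intro s hs1 hs2
  intro δ hδ
  have e := (hs1 δ hδ).symm.trans (hs2 δ hδ)
  simp at e

theorem cntA_one : ∀ n, cntA 1 n = if n = 0 then 2 else 0 := by
  intro n
  have h : ∀ ε : Fin 1 → SX, runStat (Lz ε) = (0, false) := by
    intro ε
    rw [Lz_eq_cons ε]
    have : Lz (Fin.tail ε) = [] := rfl
    rw [this]
    rfl
  rcases n with _ | n
  · rw [cntA, if_pos rfl]
    rw [Finset.filter_true_of_mem (fun ε _ => h ε), Finset.card_univ]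
    simp [SX]
  · rw [cntA, if_neg (Nat.succ_ne_zero n)]
    rw [Finset.filter_false_of_mem, Finset.card_empty]
    intro ε _
    rw [h ε]
    simp

theorem cntB_one (n : ℕ) : cntB 1 n = 0 := by
  have h : ∀ ε : Fin 1 → SX, runStat (Lz ε) = (0, false) := by
    intro ε
    rw [Lz_eq_cons ε]
    have : Lz (Fin.tail ε) = [] := rfl
    rw [this]
    rfl
  rw [cntB, Finset.filter_false_of_mem, Finset.card_empty]
  intro ε _
  rw [h ε]
  simp

theorem cons_one {t : ℕ} (x : SX) (δ : Fin (t + 1) → SX) :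
    (Fin.cons x δ : Fin (t + 2) → SX) 1 = δ 0 := by
  have : (1 : Fin (t + 2)) = (0 : Fin (t + 1)).succ := by
    simp [Fin.ext_iff]
  rw [this, Fin.cons_succ]

theorem cntA_rec (t n : ℕ) :
    cntA (t + 2) n = cntA (t + 1) n + cntB (t + 1) n := by
  rw [← filter_fst_card, cntA]
  apply Finset.card_nbij' (fun ε => Fin.tail ε) (fun δ => Fin.cons (negX (δ 0)) δ)
  · intro ε hε
    simp only [Finset.mem_coe, Finset.mem_filter, Finset.mem_univ, true_and] at hε ⊢
    rw [runStat_Lz] at hε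
    by_cases h : (ε 0 : ℤ) = (ε 1 : ℤ)
    · rw [if_pos h] at hε
      exact absurd (congrArg Prod.snd hε) (by simp)
    · rw [if_neg h] at hε
      exact congrArg Prod.fst hε
  · intro δ hδ
    simp only [Finset.mem_coe, Finset.mem_filter, Finset.mem_univ, true_and] at hδ ⊢
    rw [runStat_Lz, Fin.cons_zero, cons_one, Fin.tail_cons, if_neg (negX_ne (δ 0)), hδ]
  · intro ε hε
    simp only [Finset.mem_coe, Finset.mem_filter, Finset.mem_univ, true_and] at hε
    rw [runStat_Lz] at hε
    have h : (ε 0 : ℤ) ≠ (ε 1 : ℤ) := by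
      intro h
      rw [if_pos h] at hε
      exact absurd (congrArg Prod.snd hε) (by simp)
    have ht0 : Fin.tail ε 0 = ε 1 := rfl
    beta_reduce
    rw [ht0, ← eq_negX_of_ne h, Fin.cons_self_tail]
  · intro δ _
    exact Fin.tail_cons _ _

theorem cntB_rec (t n : ℕ) :
    cntB (t + 2) n = ((Finset.univ : Finset (Fin (t + 1) → SX)).filter fun δ =>
      if (runStat (Lz δ)).2 then (runStat (Lz δ)).1 = n
      else (runStat (Lz δ)).1 + 1 = n).card := by
  rw [cntB]
  apply Finset.card_nbij' (fun ε => Fin.tail ε) (fun δ => Fin.cons (δ 0) δ)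
  · intro ε hε
    simp only [Finset.mem_coe, Finset.mem_filter, Finset.mem_univ, true_and] at hε ⊢
    rw [runStat_Lz] at hε
    by_cases h : (ε 0 : ℤ) = (ε 1 : ℤ)
    · rw [if_pos h] at hε
      have h1 := congrArg Prod.fst hε
      simp only at h1
      rcases hs : (runStat (Lz (Fin.tail ε))).2 with _ | _ <;> rw [hs] at h1 <;>
        simp [hs, ← h1]
    · rw [if_neg h] at hε
      exact absurd (congrArg Prod.snd hε) (by simp)
  · intro δ hδ
    simp only [Finset.mem_coe, Finset.mem_filter, Finset.mem_univ, true_and] at hδ ⊢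
    rw [runStat_Lz, Fin.cons_zero, cons_one, Fin.tail_cons, if_pos rfl]
    rcases hs : (runStat (Lz δ)).2 with _ | _ <;> rw [hs] at hδ <;> simp_all
  · intro ε hε
    simp only [Finset.mem_coe, Finset.mem_filter, Finset.mem_univ, true_and] at hε
    rw [runStat_Lz] at hε
    have h : (ε 0 : ℤ) = (ε 1 : ℤ) := by
      by_contra h
      rw [if_neg h] at hε
      exact absurd (congrArg Prod.snd hε) (by simp)
    have ht0 : Fin.tail ε 0 = ε 1 := rfl
    beta_reduce
    rw [ht0, ← eq_of_coe_eq h, Fin.cons_self_tail]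
  · intro δ _
    exact Fin.tail_cons _ _

theorem cntB_rec0 (t : ℕ) : cntB (t + 2) 0 = cntB (t + 1) 0 := by
  rw [cntB_rec, cntB]
  congr 1
  apply Finset.filter_congr
  intro δ _
  rcases hs : runStat (Lz δ) with ⟨c, b⟩
  cases b <;> simp [Prod.ext_iff]

theorem cntB_recS (t n : ℕ) :
    cntB (t + 2) (n + 1) = cntB (t + 1) (n + 1) + cntA (t + 1) n := by
  rw [cntB_rec, cntB, cntA]
  have h : ∀ δ : Fin (t + 1) → SX,
      (if (runStat (Lz δ)).2 then (runStat (Lz δ)).1 = n + 1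
        else (runStat (Lz δ)).1 + 1 = n + 1) ↔
      (runStat (Lz δ) = (n + 1, true) ∨ runStat (Lz δ) = (n, false)) := by
    intro δ
    rcases hs : runStat (Lz δ) with ⟨c, b⟩
    cases b <;> simp [Prod.ext_iff] <;> omega
  rw [Finset.filter_congr (fun δ _ => h δ), Finset.filter_or]
  apply Finset.card_union_of_disjoint
  apply Finset.disjoint_filter_filter'
  intro s hs1 hs2 δ hδ
  have e := (hs1 δ hδ).symm.trans (hs2 δ hδ)
  simp at e

theorem cnt_formula : ∀ t n : ℕ, cntA (t + 1) n = 2 * t.choose (2 * n) ∧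
    cntB (t + 1) n = (match n with | 0 => 0 | (m + 1) => 2 * t.choose (2 * m + 1)) := by
  intro t
  induction t with
  | zero =>
    intro n
    refine ⟨?_, ?_⟩
    · rw [cntA_one]
      rcases n with _ | m
      · simp
      · rw [if_neg (Nat.succ_ne_zero m), Nat.choose_eq_zero_of_lt (by omega)]
    · rw [cntB_one]
      rcases n with _ | m
      · rfl
      · simp [Nat.choose_eq_zero_of_lt (show 0 < 2 * m + 1 by omega)]
  | succ t IH =>
    intro n
    refine ⟨?_, ?_⟩
    · rw [cntA_rec]
      rcases n with _ | m
      · have hA : cntA (t + 1) 0 = 2 * t.choose 0 := (IH 0).1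
        have hB : cntB (t + 1) 0 = 0 := (IH 0).2
        rw [hA, hB]
        simp
      · have hA : cntA (t + 1) (m + 1) = 2 * t.choose (2 * m + 2) := by
          have := (IH (m + 1)).1
          rwa [show 2 * (m + 1) = 2 * m + 2 by omega] at this
        have hB : cntB (t + 1) (m + 1) = 2 * t.choose (2 * m + 1) := (IH (m + 1)).2
        have hp : (t + 1).choose (2 * m + 2) = t.choose (2 * m + 1) + t.choose (2 * m + 2) := by
          simpa [Nat.succ_eq_add_one] using Nat.choose_succ_succ t (2 * m + 1)
        rw [hA, hB, show 2 * (m + 1) = 2 * m + 2 by omega]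
        omega
    · rcases n with _ | m
      · rw [cntB_rec0, (IH 0).2]
      · rw [cntB_recS]
        show cntB (t + 1) (m + 1) + cntA (t + 1) m = 2 * (t + 1).choose (2 * m + 1)
        have hB : cntB (t + 1) (m + 1) = 2 * t.choose (2 * m + 1) := (IH (m + 1)).2
        have hA : cntA (t + 1) m = 2 * t.choose (2 * m) := (IH m).1
        have hp : (t + 1).choose (2 * m + 1) = t.choose (2 * m) + t.choose (2 * m + 1) := by
          simpa [Nat.succ_eq_add_one] using Nat.choose_succ_succ t (2 * m)
        omega

/-- The number of `t`-tuples `(ε_1, …, ε_t)` with each `ε_i ∈ {+1, -1}` whose sequence of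
maximal runs of consecutive equal entries contains exactly `n` runs of length at least `2`
is `2 · C(t, 2n)`. -/
theorem card_sign_tuples_with_n_long_runs (t n : ℕ) (ht : 1 ≤ t) :
    ((Finset.univ : Finset (Fin t → ({1, -1} : Finset ℤ))).filter fun ε =>
        ((List.ofFn fun i => ((ε i : ℤ))).splitBy (· == ·)).countP
          (fun run => 2 ≤ run.length) = n).card
      = 2 * t.choose (2 * n) := by
  obtain ⟨t, rfl⟩ : ∃ t', t = t' + 1 := ⟨t - 1, by omega⟩
  have key : ∀ ε : Fin (t + 1) → SX,
      (((List.ofFn fun i => ((ε i : ℤ))).splitBy (· == ·)).countP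
        (fun run => 2 ≤ run.length) = n) ↔ ((runStat (Lz ε)).1 = n) := by
    intro ε
    have h := (runStat_spec (Lz ε)).1
    simp only [Lz] at h
    rw [h]
    rfl
  rw [Finset.filter_congr (fun ε _ => key ε), filter_fst_card, (cnt_formula t n).1,
    (cnt_formula t n).2]
  rcases n with _ | m
  · show 2 * t.choose 0 + 0 = 2 * (t + 1).choose 0
    simp
  · show 2 * t.choose (2 * (m + 1)) + 2 * t.choose (2 * m + 1)
        = 2 * (t + 1).choose (2 * (m + 1))
    have hp : (t + 1).choose (2 * m + 2) = t.choose (2 * m + 1) + t.choose (2 * m + 2) := by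
      simpa [Nat.succ_eq_add_one] using Nat.choose_succ_succ t (2 * m + 1)
    rw [show 2 * (m + 1) = 2 * m + 2 by omega]
    omega
end
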